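/- arXiv:2205.07598 — 3 statements merged into one kernel-verified Lean document; each statement's English description precedes it below -/
import Mathlib

section
/- Let a ∈ ℝ^M have nonnegative entries, let c ∈ ℝ^{M×K} have nonnegative entries, and let d ≥ 0, σ² > 0. Then the function g : ℝ^{MK}_{≥0} × ℝ^{K−1}_{≥0} → ℝ given by g(x, y) = (Σ_m a_m x_{m,k})² / (Σ_{i≠k} y_i² + Σ_{m,i} c_{m,i} x_{m,i}² + d + σ²) is quasiconcave on the nonnegative orthant: its superlevel sets {(x,y) : g(x,y) ≥ t} are convex for every t ≥ 0. -/
/-!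
The denominator is the squared Euclidean norm of the affine image
`A(x, y) = ((y_i)_{i ≠ k}, (√c_{m,i} x_{m,i})_{m,i}, √(d + σ²))`, which never vanishes, and on the
nonnegative orthant the numerator is the square of the nonnegative linear form
`N(x, y) = Σ_m a_m x_{m,k}`. Hence `t ≤ N² / ‖A‖²` is the second-order cone constraint
`√t ‖A‖ ≤ N`, whose left side is convex and whose right side is linear.
-/

open Finset

theorem Convex.setOf_le_sq_div_norm_sq {E F : Type*} [AddCommGroup E] [Module ℝ E]
    [NormedAddCommGroup F] [NormedSpace ℝ F] {s : Set E} (hs : Convex ℝ s) (N : E →ₗ[ℝ] ℝ)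
    (hN : ∀ p ∈ s, 0 ≤ N p) (A : E →ᵃ[ℝ] F) (hA : ∀ p, A p ≠ 0) {t : ℝ} (ht : 0 ≤ t) :
    Convex ℝ {p | p ∈ s ∧ t ≤ N p ^ 2 / ‖A p‖ ^ 2} := by
  have hcone : ConvexOn ℝ s fun p => √t * ‖A p‖ - N p :=
    ((((convexOn_norm convex_univ).comp_affineMap A).smul (Real.sqrt_nonneg t)).subset
      (Set.subset_univ s) hs).sub (N.concaveOn hs)
  convert hcone.convex_le 0 using 1
  ext p
  refine and_congr_right fun hp => ?_
  have hsq : t * ‖A p‖ ^ 2 = (√t * ‖A p‖) ^ 2 := by rw [mul_pow, Real.sq_sqrt ht]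
  rw [sub_nonpos, le_div_iff₀ (by positivity [hA p]), hsq,
    pow_le_pow_iff_left₀ (by positivity) (hN p hp) two_ne_zero]

section MRT

variable {M K : ℕ}

def mrtSignal (k : Fin K) (a : Fin M → ℝ) : (Fin M → Fin K → ℝ) × (Fin K → ℝ) →ₗ[ℝ] ℝ where
  toFun p := ∑ m, a m * p.1 m k
  map_add' p q := by simp only [Prod.fst_add, Pi.add_apply, mul_add, sum_add_distrib]
  map_smul' r p := by
    simp only [Prod.smul_fst, Pi.smul_apply, smul_eq_mul, mul_sum, RingHom.id_apply,
      mul_left_comm]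

noncomputable def mrtInterferenceNoise (k : Fin K) (c : Fin M → Fin K → ℝ) (e : ℝ) :
    (Fin M → Fin K → ℝ) × (Fin K → ℝ) →ᵃ[ℝ]
      EuclideanSpace ℝ ({j // j ≠ k} ⊕ (Fin M × Fin K) ⊕ Unit) where
  toFun p := WithLp.toLp 2 <|
    Sum.elim (fun j => p.2 j) (Sum.elim (fun mi => √(c mi.1 mi.2) * p.1 mi.1 mi.2) fun _ => √e)
  linear :=
    { toFun p := WithLp.toLp 2 <|
        Sum.elim (fun j => p.2 j) (Sum.elim (fun mi => √(c mi.1 mi.2) * p.1 mi.1 mi.2) 0)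
      map_add' p q := by ext (j | mi | u) <;> simp [mul_add]
      map_smul' r p := by ext (j | mi | u) <;> simp [mul_left_comm] }
  map_vadd' p v := by ext (j | mi | u) <;> simp [mul_add]

theorem norm_mrtInterferenceNoise_sq (k : Fin K) {c : Fin M → Fin K → ℝ}
    (hc : ∀ m i, 0 ≤ c m i) {e : ℝ} (he : 0 ≤ e) (p : (Fin M → Fin K → ℝ) × (Fin K → ℝ)) :
    ‖mrtInterferenceNoise k c e p‖ ^ 2 =
      ∑ i ∈ univ.erase k, p.2 i ^ 2 + ∑ m, ∑ i, c m i * p.1 m i ^ 2 + e := by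
  have hy : ∑ j : {j // j ≠ k}, p.2 j ^ 2 = ∑ i ∈ univ.erase k, p.2 i ^ 2 :=
    (sum_subtype (univ.erase k) (fun _ => by simp) fun i => p.2 i ^ 2).symm
  rw [EuclideanSpace.real_norm_sq_eq, Fintype.sum_sum_type, Fintype.sum_sum_type,
    Fintype.sum_prod_type]
  simp [mrtInterferenceNoise, mul_pow, Real.sq_sqrt, hc, he, add_assoc, hy]

theorem mrtInterferenceNoise_ne_zero (k : Fin K) (c : Fin M → Fin K → ℝ) {e : ℝ} (he : 0 < e)
    (p : (Fin M → Fin K → ℝ) × (Fin K → ℝ)) : mrtInterferenceNoise k c e p ≠ 0 := fun h => by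
  simpa [mrtInterferenceNoise, Real.sqrt_ne_zero'.mpr he] using congr(($h) (Sum.inr (Sum.inr ())))

end MRT

/-- Quasiconcavity of the MRT SINR objective: the superlevel sets of
g(x,y) = (Σ_m a_m x_{m,k})² / (Σ_{i≠k} y_i² + Σ_{m,i} c_{m,i} x_{m,i}² + d + σ²)
within the nonnegative orthant are convex for every t ≥ 0. -/
theorem stmt_8 {M K : ℕ} (k : Fin K) (a : Fin M → ℝ) (c : Fin M → Fin K → ℝ)
    (d σ2 : ℝ) (ha : ∀ m, 0 ≤ a m) (hc : ∀ m i, 0 ≤ c m i)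
    (hd : 0 ≤ d) (hσ : 0 < σ2) :
    ∀ t : ℝ, 0 ≤ t →
      Convex ℝ {p : (Fin M → Fin K → ℝ) × (Fin K → ℝ) |
        (∀ m i, 0 ≤ p.1 m i) ∧ (∀ i, 0 ≤ p.2 i) ∧
        t ≤ (∑ m, a m * p.1 m k)^2 /
          ((∑ i ∈ univ.erase k, (p.2 i)^2) + (∑ m, ∑ i, c m i * (p.1 m i)^2) + d + σ2)} := by
  intro t ht
  have hnoise : 0 < d + σ2 := by positivity
  have hsignal (p) (hp : p ∈ Set.Ici 0) : 0 ≤ mrtSignal k a p :=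
    show 0 ≤ ∑ m, a m * p.1 m k from
      sum_nonneg fun m _ => mul_nonneg (ha m) ((Prod.le_def.mp hp).1 m k)
  have hcone := (convex_Ici 0).setOf_le_sq_div_norm_sq (mrtSignal k a) hsignal
    (mrtInterferenceNoise k c (d + σ2)) (mrtInterferenceNoise_ne_zero k c hnoise) ht
  refine (congrArg (Convex ℝ) (Set.ext fun p => ?_)).mpr hcone
  rw [Set.mem_ofPred_eq, Set.mem_ofPred_eq, norm_mrtInterferenceNoise_sq k hc hnoise.le,
    ← add_assoc, ← and_assoc]
  rfl
end

section
/- Fix t > 0 and for each k ∈ {1,…,K} suppose SINR_k(p) = n_k p_k / (Σ_i B_{k,i} p_i + d_k) where n_k > 0, B_{k,i} ≥ 0 with B_{k,k} = 0 is not required (B_{k,k} ≥ 0 allowed provided n_k > t·B_{k,k} at solvability), and d_k > 0. If p, p' ∈ ℝ^K with p' having positive entries, SINR_k(p) = t for all k, and SINR_k(p') ≥ t for all k, then p_k ≤ p'_k for all k, and p_k ≥ 0 for all k. -/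
/-! Let `c` be the largest ratio `p_k / p'_k`, attained at user `k`, so that `p ≤ c • p'`. Scaling
the `k`-th inequality for `p'` by `c` and comparing it with the `k`-th equation for `p`, the
interference terms drop out and only the noise remains: `c * d_k ≤ d_k`, hence `c ≤ 1`. Dually,
the smallest ratio `e` satisfies `d_k ≤ e * d_k`, so `e ≥ 0`. -/

open Finset

section Supersolution

variable {ι : Type*} [Fintype ι] {A : ι → ι → ℝ} {b n p q : ι → ℝ} {c : ℝ}

lemma sum_mul_le_mul_sum_of_le_mul {a : ι → ℝ} (ha : ∀ i, 0 ≤ a i)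
    (hpq : ∀ i, p i ≤ c * q i) : ∑ i, a i * p i ≤ c * ∑ i, a i * q i := by
  rw [mul_sum]
  exact sum_le_sum fun i _ => by nlinarith [mul_le_mul_of_nonneg_left (hpq i) (ha i)]

lemma mul_sum_le_sum_mul_of_mul_le {a : ι → ℝ} (ha : ∀ i, 0 ≤ a i)
    (hpq : ∀ i, c * q i ≤ p i) : c * ∑ i, a i * q i ≤ ∑ i, a i * p i := by
  rw [mul_sum]
  exact sum_le_sum fun i _ => by nlinarith [mul_le_mul_of_nonneg_left (hpq i) (ha i)]

lemma exists_eq_mul_and_forall_le_mul [Nonempty ι] (hq : ∀ i, 0 < q i) :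
    ∃ c k, p k = c * q k ∧ ∀ i, p i ≤ c * q i := by
  obtain ⟨k, -, hk⟩ := exists_max_image univ (fun i => p i / q i) univ_nonempty
  exact ⟨p k / q k, k, (div_mul_cancel₀ _ (hq k).ne').symm,
    fun i => (div_le_iff₀ (hq i)).mp (hk i (mem_univ i))⟩

lemma exists_eq_mul_and_forall_mul_le [Nonempty ι] (hq : ∀ i, 0 < q i) :
    ∃ c k, p k = c * q k ∧ ∀ i, c * q i ≤ p i := by
  obtain ⟨c, k, hk, hle⟩ := exists_eq_mul_and_forall_le_mul (p := -p) hq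
  simp only [Pi.neg_apply] at hk hle
  exact ⟨-c, k, by linarith, fun i => by linarith [hle i]⟩

lemma le_one_of_forall_le_mul {k : ι} (hA : ∀ i, 0 ≤ A k i) (hb : 0 < b k)
    (hp : n k * p k = ∑ i, A k i * p i + b k) (hq : ∑ i, A k i * q i + b k ≤ n k * q k)
    (hk : p k = c * q k) (hpq : ∀ i, p i ≤ c * q i) : c ≤ 1 := by
  by_contra! hc
  have hAp := sum_mul_le_mul_sum_of_le_mul hA hpq
  have : c * (∑ i, A k i * q i + b k) ≤ c * (n k * q k) :=
    mul_le_mul_of_nonneg_left hq (by linarith)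
  have : n k * p k = c * (n k * q k) := by rw [hk]; ring
  nlinarith

lemma nonneg_of_forall_mul_le {k : ι} (hA : ∀ i, 0 ≤ A k i) (hb : 0 < b k)
    (hp : n k * p k = ∑ i, A k i * p i + b k) (hq : ∑ i, A k i * q i + b k ≤ n k * q k)
    (hk : p k = c * q k) (hpq : ∀ i, c * q i ≤ p i) : 0 ≤ c := by
  by_contra! hc
  have hAp := mul_sum_le_sum_mul_of_mul_le hA hpq
  have : c * (n k * q k) ≤ c * (∑ i, A k i * q i + b k) := mul_le_mul_of_nonpos_left hq hc.le
  have : n k * p k = c * (n k * q k) := by rw [hk]; ring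
  nlinarith

theorem nonneg_and_le_of_supersolution (hA : ∀ k i, 0 ≤ A k i) (hb : ∀ k, 0 < b k)
    (hp : ∀ k, n k * p k = ∑ i, A k i * p i + b k)
    (hq : ∀ k, ∑ i, A k i * q i + b k ≤ n k * q k) (hq_pos : ∀ k, 0 < q k) (j : ι) :
    0 ≤ p j ∧ p j ≤ q j := by
  have : Nonempty ι := ⟨j⟩
  obtain ⟨e, m, hm, hge⟩ := exists_eq_mul_and_forall_mul_le (p := p) hq_pos
  obtain ⟨c, k, hk, hle⟩ := exists_eq_mul_and_forall_le_mul (p := p) hq_pos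
  have he := nonneg_of_forall_mul_le (hA m) (hb m) (hp m) (hq m) hm hge
  have hc := le_one_of_forall_le_mul (hA k) (hb k) (hp k) (hq k) hk hle
  exact ⟨(mul_nonneg he (hq_pos j).le).trans (hge j),
    (hle j).trans (mul_le_of_le_one_left (hq_pos j).le hc)⟩

end Supersolution

theorem stmt_12_general {K : ℕ} (t : ℝ) (ht : 0 < t)
    (n : Fin K → ℝ) (B : Fin K → Fin K → ℝ) (d : Fin K → ℝ)
    (hB : ∀ k i, 0 ≤ B k i) (hd : ∀ k, 0 < d k)
    (p p' : Fin K → ℝ) (hp' : ∀ k, 0 < p' k)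
    (hSINRp : ∀ k, n k * p k / ((∑ i, B k i * p i) + d k) = t)
    (hSINRp' : ∀ k, t ≤ n k * p' k / ((∑ i, B k i * p' i) + d k)) :
    ∀ k, 0 ≤ p k ∧ p k ≤ p' k := by
  have scale : ∀ (q : Fin K → ℝ) k,
      t * ((∑ i, B k i * q i) + d k) = ∑ i, t * B k i * q i + t * d k := fun q k => by
    simp only [mul_add, mul_sum, mul_assoc]
  refine nonneg_and_le_of_supersolution (n := n) (fun k i => mul_nonneg ht.le (hB k i))
    (fun k => mul_pos ht (hd k)) (fun k => ?_) (fun k => ?_) hp'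
  · have hD : (∑ i, B k i * p i) + d k ≠ 0 := by
      intro h0
      simpa [h0, ht.ne] using hSINRp k
    rw [← scale, ← hSINRp k, div_mul_cancel₀ _ hD]
  · have hD : 0 < (∑ i, B k i * p' i) + d k :=
      add_pos_of_nonneg_of_pos (sum_nonneg fun i _ => mul_nonneg (hB k i) (hp' i).le) (hd k)
    rw [← scale]
    exact (le_div_iff₀ hD).mp (hSINRp' k)

/-- Lemma 2: the exact solution of the SINR equations is componentwise minimal
among all feasible power vectors achieving SINR at least t, and is nonnegative. -/
theorem stmt_12 {K : ℕ} (t : ℝ) (ht : 0 < t)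
    (n : Fin K → ℝ) (B : Fin K → Fin K → ℝ) (d : Fin K → ℝ)
    (hn : ∀ k, 0 < n k) (hB : ∀ k i, 0 ≤ B k i) (hd : ∀ k, 0 < d k)
    (hnB : ∀ k, t * B k k < n k)
    (p p' : Fin K → ℝ) (hp' : ∀ k, 0 < p' k)
    (hSINRp : ∀ k, n k * p k / ((∑ i, B k i * p i) + d k) = t)
    (hSINRp' : ∀ k, t ≤ n k * p' k / ((∑ i, B k i * p' i) + d k)) :
    ∀ k, 0 ≤ p k ∧ p k ≤ p' k :=
  stmt_12_general t ht n B d hB hd p p' hp' hSINRp hSINRp'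
end

section
/- Under the setting of the previous lemma (SINR_k(p) = n_k p_k/(Σ_i B_{k,i} p_i + d_k), coefficients nonnegative, d_k > 0, n_k > 0): the feasibility system {p ≥ 0, SINR_k(p) ≥ t for all k, P_m(p) ≤ P_d for all m, C_m(p) ≤ C_d for all m}, where each P_m is a nonnegative linear functional of p plus a constant and each C_m(p) = log det(I + (1/σ_m²) F_m diag(p) F_m^H), is feasible if and only if the unique solution p* of the linear system SINR_k(p) = t for all k (assuming it exists and is unique) satisfies p* ≥ 0, P_m(p*) ≤ P_d, and C_m(p*) ≤ C_d for all m. -/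
open Matrix Finset ComplexOrder

/-!
If `p ≥ 0` meets every SINR target, then `p` is a strictly positive strict supersolution of
the Z-matrix system `n_k x_k ≥ t ∑ᵢ B_{k,i} x_i`, and the minimum-ratio argument shows that
every supersolution of that system is nonnegative. Applied to `p*` and to `p - p*` this gives
`0 ≤ p* ≤ p`. Both constraint families are monotone in the powers: `P_m` because its
coefficients are nonnegative, `C_m` because `det A ≤ det (A + B)` for `A` positive definite and
`B` positive semidefinite. Hence `p*` is feasible whenever anything is.
-/

section MinimumRatio

variable {ι : Type*} [Fintype ι]

theorem nonneg_of_sum_mul_le_mul_of_pos_witness {a : ι → ℝ} {W : ι → ι → ℝ}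
    (hW : ∀ k i, 0 ≤ W k i) {p x : ι → ℝ} (hp : ∀ k, 0 < p k)
    (hpW : ∀ k, ∑ i, W k i * p i < a k * p k) (hxW : ∀ k, ∑ i, W k i * x i ≤ a k * x k) :
    0 ≤ x := by
  by_contra hneg
  obtain ⟨k₁, hk₁⟩ : ∃ k, x k < 0 := by simpa [Pi.le_def] using hneg
  obtain ⟨k₀, -, hmin⟩ :=
    exists_min_image univ (fun k => x k / p k) ⟨k₁, mem_univ k₁⟩
  set s := x k₀ / p k₀
  have hs : s < 0 := (hmin k₁ (mem_univ k₁)).trans_lt (div_neg_of_neg_of_pos hk₁ (hp k₁))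
  have hsx : ∀ i, s * p i ≤ x i := fun i => (le_div_iff₀ (hp i)).mp (hmin i (mem_univ i))
  have hlt : a k₀ * x k₀ < ∑ i, W k₀ i * x i :=
    calc a k₀ * x k₀ = s * (a k₀ * p k₀) := by
          rw [mul_left_comm, div_mul_cancel₀ _ (hp k₀).ne']
      _ < s * ∑ i, W k₀ i * p i := mul_lt_mul_of_neg_left (hpW k₀) hs
      _ = ∑ i, W k₀ i * (s * p i) := by rw [mul_sum]; simp_rw [mul_left_comm]
      _ ≤ ∑ i, W k₀ i * x i :=
          sum_le_sum fun i _ => mul_le_mul_of_nonneg_left (hsx i) (hW k₀ i)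
  exact (hxW k₀).not_gt hlt

theorem nonneg_and_le_of_sinr_feasible {t : ℝ} (ht : 0 < t) {n d : ι → ℝ}
    {B : ι → ι → ℝ} (hB : ∀ k i, 0 ≤ B k i) (hd : ∀ k, 0 < d k) {p q : ι → ℝ}
    (hp : 0 ≤ p)
    (hpB : ∀ k, t * (∑ i, B k i * p i + d k) ≤ n k * p k)
    (hqB : ∀ k, n k * q k = t * (∑ i, B k i * q i + d k)) :
    0 ≤ q ∧ q ≤ p := by
  have hW : ∀ k i, 0 ≤ t * B k i := fun k i => mul_nonneg ht.le (hB k i)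
  have hsum : ∀ (x : ι → ℝ) k, ∑ i, t * B k i * x i = t * ∑ i, B k i * x i := by
    intro x k
    simp_rw [mul_sum, mul_assoc]
  have hpW : ∀ k, ∑ i, t * B k i * p i < n k * p k := fun k => by
    rw [hsum]; nlinarith [hpB k, hd k]
  have hp_pos : ∀ k, 0 < p k := fun k => by
    have hBp : 0 ≤ ∑ i, t * B k i * p i := sum_nonneg fun i _ => mul_nonneg (hW k i) (hp i)
    have hnp : 0 < n k * p k := hBp.trans_lt (hpW k)
    exact (hp k).lt_of_ne fun h => by simp [← h] at hnp
  refine ⟨nonneg_of_sum_mul_le_mul_of_pos_witness hW hp_pos hpW fun k => ?_,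
    sub_nonneg.mp <| nonneg_of_sum_mul_le_mul_of_pos_witness hW hp_pos hpW fun k => ?_⟩
  · rw [hsum, hqB]; nlinarith [hd k]
  · simp only [Pi.sub_apply, mul_sub, sum_sub_distrib, hsum]
    linarith [hpB k, hqB k]

end MinimumRatio

section LogDet

variable {𝕜 : Type*} [RCLike 𝕜] {m n : Type*} [Fintype m] [Fintype n] [DecidableEq n]

theorem Matrix.PosSemidef.one_le_det_one_add [DecidableEq m] {N : Matrix m m 𝕜}
    (hN : N.PosSemidef) : 1 ≤ (1 + N).det := by
  have hN_sa : IsSelfAdjoint N := hN.isHermitian.isSelfAdjoint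
  have hcfc : 1 + N = cfc (fun x : ℝ => 1 + x) N := by
    rw [cfc_add .., cfc_const_one ℝ N, cfc_id' ℝ N]
  rw [hcfc, hN.isHermitian.cfc_eq]
  simp only [IsHermitian.cfc, det_map, det_diagonal, Function.comp_apply, map_add, map_one]
  exact one_le_prod fun i _ => le_add_of_nonneg_right <| by simpa using hN.eigenvalues_nonneg i

open scoped MatrixOrder in
/-- Writing `B = Cᴴ C`, Sylvester's identity gives
`det (A + B) = det A * det (1 + C A⁻¹ Cᴴ)`, and the second factor is `≥ 1`. -/
theorem Matrix.PosDef.det_le_det_add [DecidableEq m] {A B : Matrix m m 𝕜} (hA : A.PosDef)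
    (hB : B.PosSemidef) : A.det ≤ (A + B).det := by
  obtain ⟨C, rfl⟩ := CStarAlgebra.nonneg_iff_eq_star_mul_self.mp hB.nonneg
  have hfac : A + star C * C = A * (1 + A⁻¹ * star C * C) := by
    rw [mul_add, mul_one, ← mul_assoc, ← mul_assoc,
      mul_nonsing_inv _ (A.isUnit_iff_isUnit_det.mp hA.isUnit), one_mul]
  have hpsd : (C * A⁻¹ * Cᴴ).PosSemidef := hA.inv.posSemidef.mul_mul_conjTranspose_same C
  calc A.det = A.det * 1 := (mul_one _).symm
    _ ≤ A.det * (1 + C * A⁻¹ * Cᴴ).det :=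
      mul_le_mul_of_nonneg_left hpsd.one_le_det_one_add hA.det_pos.le
    _ = (A + star C * C).det := by
      rw [hfac, det_mul, star_eq_conjTranspose, Matrix.mul_assoc C, det_one_add_mul_comm]

theorem Matrix.posSemidef_smul_mul_diagonal_mul_conjTranspose (F : Matrix m n 𝕜) {c : 𝕜}
    (hc : 0 ≤ c) {r : n → ℝ} (hr : 0 ≤ r) :
    (c • (F * diagonal (fun k => (r k : 𝕜)) * Fᴴ)).PosSemidef :=
  ((PosSemidef.diagonal fun k => RCLike.ofReal_nonneg.mpr (hr k)).mul_mul_conjTranspose_same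
    F).smul hc

theorem Matrix.det_one_add_smul_mul_diagonal_mul_conjTranspose_mono [DecidableEq m]
    (F : Matrix m n 𝕜) {c : 𝕜} (hc : 0 ≤ c) {q p : n → ℝ} (hq : 0 ≤ q)
    (hqp : q ≤ p) :
    (1 + c • (F * diagonal (fun k => (q k : 𝕜)) * Fᴴ)).det
      ≤ (1 + c • (F * diagonal (fun k => (p k : 𝕜)) * Fᴴ)).det := by
  have hsplit : diagonal (fun k => (p k : 𝕜))
      = diagonal (fun k => (q k : 𝕜)) + diagonal (fun k => ((p - q) k : 𝕜)) := by
    rw [diagonal_add]; congr 1; funext k; simp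
  rw [hsplit, Matrix.mul_add, Matrix.add_mul, smul_add, ← add_assoc]
  exact (PosDef.one.add_posSemidef
    (posSemidef_smul_mul_diagonal_mul_conjTranspose F hc hq)).det_le_det_add
    (posSemidef_smul_mul_diagonal_mul_conjTranspose F hc (sub_nonneg.mpr hqp))

end LogDet

theorem stmt_13_general {K R M : ℕ} (t : ℝ) (ht : 0 < t)
    (n : Fin K → ℝ) (B : Fin K → Fin K → ℝ) (d : Fin K → ℝ)
    (hB : ∀ k i, 0 ≤ B k i) (hd : ∀ k, 0 < d k)
    (e : Fin M → Fin K → ℝ) (f : Fin M → ℝ) (he : ∀ m k, 0 ≤ e m k)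
    (Pd Cd : ℝ) (F : Fin M → Matrix (Fin R) (Fin K) ℂ) (σ : Fin M → ℝ)
    (SINR : Fin K → (Fin K → ℝ) → ℝ)
    (hSINR : ∀ k p, SINR k p = n k * p k / ((∑ i, B k i * p i) + d k))
    (Pm : Fin M → (Fin K → ℝ) → ℝ)
    (hPm : ∀ m p, Pm m p = (∑ k, e m k * p k) + f m)
    (Cm : Fin M → (Fin K → ℝ) → ℝ)
    (hCm : ∀ m p, Cm m p =
      Real.log (((1 : Matrix (Fin R) (Fin R) ℂ) + (((σ m)^2 : ℂ))⁻¹ •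
        (F m * Matrix.diagonal (fun k => (p k : ℂ)) * (F m)ᴴ)).det.re))
    (pstar : Fin K → ℝ)
    (hstar : ∀ k, SINR k pstar = t) :
    (∃ p : Fin K → ℝ, (∀ k, 0 ≤ p k) ∧ (∀ k, t ≤ SINR k p) ∧
        (∀ m, Pm m p ≤ Pd) ∧ (∀ m, Cm m p ≤ Cd)) ↔
    ((∀ k, 0 ≤ pstar k) ∧ (∀ m, Pm m pstar ≤ Pd) ∧ (∀ m, Cm m pstar ≤ Cd)) := by
  refine ⟨fun ⟨p, hp, hpSINR, hPp, hCp⟩ => ?_, fun ⟨hp, hP, hC⟩ =>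
    ⟨pstar, hp, fun k => (hstar k).ge, hP, hC⟩⟩
  have hpB : ∀ k, t * (∑ i, B k i * p i + d k) ≤ n k * p k := fun k =>
    (le_div_iff₀ (add_pos_of_nonneg_of_pos (sum_nonneg fun i _ => mul_nonneg (hB k i) (hp i))
      (hd k))).mp (hSINR k p ▸ hpSINR k)
  have hqB : ∀ k, n k * pstar k = t * (∑ i, B k i * pstar i + d k) := fun k => by
    have hden : ∑ i, B k i * pstar i + d k ≠ 0 := fun h0 => ht.ne' <| by
      rw [← hstar k, hSINR, h0, div_zero]
    exact (div_eq_iff hden).mp (hSINR k pstar ▸ hstar k)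
  obtain ⟨hq, hqp⟩ := nonneg_and_le_of_sinr_feasible ht hB hd hp hpB hqB
  refine ⟨hq, fun m => ?_, fun m => ?_⟩
  · have hPpm := hPp m
    rw [hPm] at hPpm ⊢
    linarith [sum_le_sum fun k (_ : k ∈ univ) => mul_le_mul_of_nonneg_left (hqp k) (he m k)]
  · have hc : (0 : ℂ) ≤ ((σ m : ℂ) ^ 2)⁻¹ := by
      rw [← Complex.ofReal_pow, ← Complex.ofReal_inv]
      exact Complex.zero_le_real.mpr (by positivity)
    have hdet_pos := (PosDef.one.add_posSemidef
      (posSemidef_smul_mul_diagonal_mul_conjTranspose (F m) hc hq)).det_pos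
    have hdet_le := det_one_add_smul_mul_diagonal_mul_conjTranspose_mono (F m) hc hq hqp
    rw [hCm]
    exact (Real.log_le_log (by simpa using (Complex.lt_def.mp hdet_pos).1)
      (Complex.le_def.mp hdet_le).1).trans (hCm m p ▸ hCp m)

/-- Lemma 3: the feasibility system of (P8) is feasible iff the unique solution
of the SINR equations satisfies all the constraints. -/
theorem stmt_13 {K R M : ℕ} (t : ℝ) (ht : 0 < t)
    (n : Fin K → ℝ) (B : Fin K → Fin K → ℝ) (d : Fin K → ℝ)
    (hn : ∀ k, 0 < n k) (hB : ∀ k i, 0 ≤ B k i) (hd : ∀ k, 0 < d k)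
    (hnB : ∀ k, t * B k k < n k)
    (e : Fin M → Fin K → ℝ) (f : Fin M → ℝ) (he : ∀ m k, 0 ≤ e m k)
    (Pd Cd : ℝ) (F : Fin M → Matrix (Fin R) (Fin K) ℂ) (σ : Fin M → ℝ)
    (hσ : ∀ m, 0 < σ m)
    (SINR : Fin K → (Fin K → ℝ) → ℝ)
    (hSINR : ∀ k p, SINR k p = n k * p k / ((∑ i, B k i * p i) + d k))
    (Pm : Fin M → (Fin K → ℝ) → ℝ)
    (hPm : ∀ m p, Pm m p = (∑ k, e m k * p k) + f m)
    (Cm : Fin M → (Fin K → ℝ) → ℝ)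
    (hCm : ∀ m p, Cm m p =
      Real.log (((1 : Matrix (Fin R) (Fin R) ℂ) + (((σ m)^2 : ℂ))⁻¹ •
        (F m * Matrix.diagonal (fun k => (p k : ℂ)) * (F m)ᴴ)).det.re))
    (pstar : Fin K → ℝ)
    (hstar : ∀ k, SINR k pstar = t)
    (huniq : ∀ q : Fin K → ℝ, (∀ k, SINR k q = t) → q = pstar) :
    (∃ p : Fin K → ℝ, (∀ k, 0 ≤ p k) ∧ (∀ k, t ≤ SINR k p) ∧
        (∀ m, Pm m p ≤ Pd) ∧ (∀ m, Cm m p ≤ Cd)) ↔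
    ((∀ k, 0 ≤ pstar k) ∧ (∀ m, Pm m pstar ≤ Pd) ∧ (∀ m, Cm m pstar ≤ Cd)) :=
  stmt_13_general t ht n B d hB hd e f he Pd Cd F σ SINR hSINR Pm hPm Cm hCm pstar hstar
end
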